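/- The complete graph K_n has book thickness exactly ⌈n/2⌉ for n ≥ 4. -/

import Mathlib

open SimpleGraph

/-- Two edges `e` and `f` interleave under the vertex order `L`:
there are endpoints `a, b` of `e` and `c, d` of `f` with `L a < L c < L b < L d`. -/
def Interleaves {V : Type*} (L : V → ℕ) (e f : Sym2 V) : Prop :=
  ∃ a b c d : V, e = s(a, b) ∧ f = s(c, d) ∧ L a < L c ∧ L c < L b ∧ L b < L d

/-- `G` admits a `k`-page book embedding with respect to the fixed vertex order `L`:
the edges can be partitioned into `k` pages so that no two edges on the same page
interleave under `L`. -/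
def PagesWrt {V : Type*} (G : SimpleGraph V) (L : V → ℕ) (k : ℕ) : Prop :=
  ∃ σ : G.edgeSet → Fin k,
    ∀ e f : G.edgeSet, σ e = σ f → ¬ Interleaves L (e : Sym2 V) (f : Sym2 V)

/-- `G` admits a `k`-page book embedding: an injective linear order of the vertices
together with a partition of the edges into `k` pages with no two edges on the same
page interleaving. -/
def HasBookEmbedding {V : Type*} (G : SimpleGraph V) (k : ℕ) : Prop :=
  ∃ L : V → ℕ, Function.Injective L ∧ PagesWrt G L k

/-- A drawing of a graph `G` in the plane: vertices are mapped to distinct points,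
and each edge is drawn as a simple continuous arc between its endpoints whose
interior avoids all vertex points. -/
structure Drawing {V : Type*} (G : SimpleGraph V) where
  pos : V → ℝ × ℝ
  posInj : Function.Injective pos
  arc : Sym2 V → ℝ → ℝ × ℝ
  cont : ∀ e ∈ G.edgeSet, ContinuousOn (arc e) (Set.Icc 0 1)
  endpts : ∀ u v : V, G.Adj u v →
    (arc s(u, v) 0 = pos u ∧ arc s(u, v) 1 = pos v) ∨
    (arc s(u, v) 0 = pos v ∧ arc s(u, v) 1 = pos u)
  injArc : ∀ e ∈ G.edgeSet, Set.InjOn (arc e) (Set.Icc 0 1)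
  noVertexInterior : ∀ e ∈ G.edgeSet, ∀ t ∈ Set.Ioo (0:ℝ) 1, ∀ v : V, arc e t ≠ pos v

/-- The set of crossing points of two edges in a drawing: common points of the
interiors of the two arcs. -/
def Drawing.CrossingPts {V : Type*} {G : SimpleGraph V} (D : Drawing G)
    (e f : Sym2 V) : Set (ℝ × ℝ) :=
  {p | ∃ t ∈ Set.Ioo (0:ℝ) 1, ∃ s ∈ Set.Ioo (0:ℝ) 1, D.arc e t = p ∧ D.arc f s = p}

/-- Two distinct edges cross in a drawing if their interiors meet. -/
def Drawing.Crosses {V : Type*} {G : SimpleGraph V} (D : Drawing G)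
    (e f : Sym2 V) : Prop :=
  e ≠ f ∧ (D.CrossingPts e f).Nonempty

/-- A drawing is planar if no two edges cross. -/
def Drawing.IsPlanarDrawing {V : Type*} {G : SimpleGraph V} (D : Drawing G) : Prop :=
  ∀ e ∈ G.edgeSet, ∀ f ∈ G.edgeSet, ¬ D.Crosses e f

/-- A drawing is 1-planar if every edge is crossed at most once: each edge crosses
at most one other edge, and any two edges cross in at most one point. -/
def Drawing.IsOnePlanarDrawing {V : Type*} {G : SimpleGraph V} (D : Drawing G) : Prop :=
  ∀ e ∈ G.edgeSet,
    {f | f ∈ G.edgeSet ∧ D.Crosses e f}.Subsingleton ∧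
    ∀ f ∈ G.edgeSet, (D.CrossingPts e f).Subsingleton

/-- A graph is planar if it admits a planar drawing. -/
def IsPlanar {V : Type*} (G : SimpleGraph V) : Prop :=
  ∃ D : Drawing G, D.IsPlanarDrawing

/-- A graph is 1-planar if it admits a drawing in which every edge is crossed
at most once. -/
def IsOnePlanar {V : Type*} (G : SimpleGraph V) : Prop :=
  ∃ D : Drawing G, D.IsOnePlanarDrawing

/-- The planar skeleton of a drawing: the subgraph of edges that are not crossed. -/
def Drawing.skeleton {V : Type*} {G : SimpleGraph V} (D : Drawing G) : SimpleGraph V where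
  Adj u v := G.Adj u v ∧ ∀ f ∈ G.edgeSet, ¬ D.Crosses s(u, v) f
  symm := by
    constructor
    intro u v h
    refine ⟨h.1.symm, ?_⟩
    rw [Sym2.eq_swap]
    exact h.2
  loopless := ⟨fun v h => G.irrefl h.1⟩

/-- The book thickness of a graph: the least number of pages over all book
embeddings. -/
noncomputable def bookThickness {V : Type*} (G : SimpleGraph V) : ℕ :=
  sInf {k : ℕ | HasBookEmbedding G k}

/-!
Place the vertices on a circle in the order given by `L`. The edges on one page are then pairwise
non-crossing chords of a convex `n`-gon, and at most `n - 3` of them are diagonals: cutting the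
polygon along one diagonal leaves two smaller polygons with `n + 2` vertices in total. The
`n (n - 3) / 2` diagonals of `K_n` therefore need at least `n / 2` pages. Conversely, for vertices
`0, …, 2m - 1` put the chord `{u, v}` on page `⌈(u + v) / 2⌉ mod m`: the pages collect the sums
`u + v` into pairs of consecutive residues mod `2m`, while the sums of two interleaving chords
differ by between `2` and `2m - 2`.
-/

open Finset

def chords (P : Finset ℕ) : Finset (ℕ × ℕ) :=
  P.offDiag.filter fun e => e.1 < e.2

def ChordsCross (e f : ℕ × ℕ) : Prop :=
  e.1 < f.1 ∧ f.1 < e.2 ∧ e.2 < f.2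

def Noncrossing (S : Finset (ℕ × ℕ)) : Prop :=
  ∀ e ∈ S, ∀ f ∈ S, ¬ ChordsCross e f

/-- `P` is read as a convex polygon with its vertices in increasing order around the boundary, so a
chord is a diagonal, rather than a side, when there are vertices on both of its sides. -/
def diagonals (P : Finset ℕ) : Finset (ℕ × ℕ) :=
  (chords P).filter fun e => (∃ c ∈ P, e.1 < c ∧ c < e.2) ∧ ∃ c ∈ P, c < e.1 ∨ e.2 < c

@[simp]
theorem mem_chords {P : Finset ℕ} {e : ℕ × ℕ} : e ∈ chords P ↔ e.1 ∈ P ∧ e.2 ∈ P ∧ e.1 < e.2 := by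
  simp only [chords, mem_filter, mem_offDiag]
  constructor
  · rintro ⟨⟨h1, h2, -⟩, h⟩; exact ⟨h1, h2, h⟩
  · rintro ⟨h1, h2, h⟩; exact ⟨⟨h1, h2, h.ne⟩, h⟩

theorem mem_diagonals {P : Finset ℕ} {e : ℕ × ℕ} :
    e ∈ diagonals P ↔ (e.1 ∈ P ∧ e.2 ∈ P ∧ e.1 < e.2) ∧
      (∃ c ∈ P, e.1 < c ∧ c < e.2) ∧ ∃ c ∈ P, c < e.1 ∨ e.2 < c :=
  mem_filter.trans (and_congr_left' mem_chords)

theorem two_mul_card_chords (P : Finset ℕ) : 2 * #(chords P) = #P * (#P - 1) := by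
  have hswap : #(P.offDiag.filter fun e => ¬ e.1 < e.2) = #(chords P) := by
    refine card_nbij' Prod.swap Prod.swap ?_ ?_ (fun _ _ => rfl) (fun _ _ => rfl) <;>
    · intro e he
      simp only [coe_filter, Set.mem_ofPred_eq, mem_offDiag, mem_coe, mem_chords, Prod.fst_swap,
        Prod.snd_swap] at he ⊢
      grind
  have hsplit := card_filter_add_card_filter_not (s := P.offDiag) fun e => e.1 < e.2
  rw [hswap, offDiag_card] at hsplit
  rw [Nat.mul_sub_one, two_mul, ← hsplit]
  rfl

theorem card_chords_sdiff_diagonals_le (P : Finset ℕ) : #(chords P \ diagonals P) ≤ #P := by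
  classical
  -- A side is determined by its larger endpoint, except `(min P, max P)`, which is sent to `min P`.
  refine card_le_card_of_injOn (fun e => if ∃ c ∈ P, e.1 < c ∧ c < e.2 then e.1 else e.2) ?_ ?_
  · intro e he
    simp only [coe_sdiff, Set.mem_sdiff, mem_coe, mem_chords] at he
    dsimp only
    split_ifs <;> simp [he.1]
  · rintro ⟨x, y⟩ he ⟨x', y'⟩ hf hef
    simp only [coe_sdiff, Set.mem_sdiff, mem_coe, mem_diagonals, mem_chords] at he hf
    simp only at hef
    split_ifs at hef with h h' h' <;> grind

theorem card_filter_mem_Icc_add_card_filter_notMem_Ioo {P : Finset ℕ} {a b : ℕ} (ha : a ∈ P)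
    (hb : b ∈ P) (hab : a < b) :
    #(P.filter (· ∈ Set.Icc a b)) + #(P.filter (· ∉ Set.Ioo a b)) = #P + 2 := by
  have hunion : P.filter (· ∈ Set.Icc a b) ∪ P.filter (· ∉ Set.Ioo a b) = P := by
    rw [← filter_or]
    exact filter_true_of_mem fun z _ => by simp only [Set.mem_Icc, Set.mem_Ioo]; omega
  have hinter : P.filter (· ∈ Set.Icc a b) ∩ P.filter (· ∉ Set.Ioo a b) = {a, b} := by
    ext z
    simp only [mem_inter, mem_filter, Set.mem_Icc, Set.mem_Ioo, mem_insert, mem_singleton]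
    grind
  rw [← card_union_add_card_inter, hunion, hinter, card_pair hab.ne]

theorem mem_diagonals_filter_of_not_chordsCross {P : Finset ℕ} {a b : ℕ} {e : ℕ × ℕ} (ha : a ∈ P)
    (hb : b ∈ P) (hab : a < b) (he : e ∈ diagonals P) (hne : e ≠ (a, b))
    (h₁ : ¬ ChordsCross e (a, b)) (h₂ : ¬ ChordsCross (a, b) e) :
    e ∈ diagonals (P.filter (· ∈ Set.Icc a b)) ∨ e ∈ diagonals (P.filter (· ∉ Set.Ioo a b)) := by
  obtain ⟨x, y⟩ := e
  obtain ⟨⟨hx, hy, hxy⟩, ⟨c, hc, hxc, hcy⟩, ⟨d, hd, hdout⟩⟩ := mem_diagonals.1 he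
  simp only [ChordsCross, ne_eq, Prod.mk.injEq] at h₁ h₂ hne
  simp only [mem_diagonals, mem_filter, Set.mem_Icc, Set.mem_Ioo]
  by_cases hin : a ≤ x ∧ y ≤ b
  · left
    refine ⟨⟨⟨hx, hin.1, by omega⟩, ⟨hy, by omega, hin.2⟩, hxy⟩, ⟨c, ⟨hc, by omega⟩, hxc, hcy⟩, ?_⟩
    rcases (by omega : a < x ∨ y < b) with h | h
    exacts [⟨a, ⟨ha, le_rfl, hab.le⟩, Or.inl h⟩, ⟨b, ⟨hb, hab.le, le_rfl⟩, Or.inr h⟩]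
  · right
    refine ⟨⟨⟨hx, by omega⟩, ⟨hy, by omega⟩, hxy⟩, ?_, ?_⟩
    · rcases (by omega : ¬(a < c ∧ c < b) ∨ (x < a ∧ a < y) ∨ (x < b ∧ b < y)) with h | h | h
      exacts [⟨c, ⟨hc, h⟩, hxc, hcy⟩, ⟨a, ⟨ha, by omega⟩, h⟩, ⟨b, ⟨hb, by omega⟩, h⟩]
    · rcases (by omega : ¬(a < d ∧ d < b) ∨ a < x ∨ y < b) with h | h | h
      exacts [⟨d, ⟨hd, h⟩, hdout⟩, ⟨a, ⟨ha, by omega⟩, Or.inl h⟩, ⟨b, ⟨hb, by omega⟩, Or.inr h⟩]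

theorem card_le_card_sub_three_of_noncrossing {P : Finset ℕ} {S : Finset (ℕ × ℕ)}
    (hS : S ⊆ diagonals P) (hnc : Noncrossing S) : #S ≤ #P - 3 := by
  induction P using Finset.strongInduction generalizing S with
  | H P ih =>
  obtain rfl | ⟨⟨a, b⟩, hab⟩ := S.eq_empty_or_nonempty
  · simp
  obtain ⟨⟨ha, hb, hlt⟩, ⟨c, hc, hac, hcb⟩, ⟨d, hd, hdout⟩⟩ := mem_diagonals.1 (hS hab)
  set P₁ := P.filter (· ∈ Set.Icc a b)
  set P₂ := P.filter (· ∉ Set.Ioo a b)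
  have hcover : S ⊆ insert (a, b) (S ∩ diagonals P₁ ∪ S ∩ diagonals P₂) := by
    intro e he
    rcases eq_or_ne e (a, b) with rfl | hne
    · exact mem_insert_self _ _
    refine mem_insert_of_mem ?_
    rcases mem_diagonals_filter_of_not_chordsCross ha hb hlt (hS he) hne (hnc _ he _ hab)
      (hnc _ hab _ he) with h | h
    exacts [mem_union_left _ (mem_inter.2 ⟨he, h⟩), mem_union_right _ (mem_inter.2 ⟨he, h⟩)]
  have hnc_inter {Q : Finset ℕ} : Noncrossing (S ∩ diagonals Q) := fun e he f hf =>
    hnc e (mem_inter.1 he).1 f (mem_inter.1 hf).1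
  have hP₁ : P₁ ⊂ P := filter_ssubset.2 ⟨d, hd, by simp only [Set.mem_Icc]; omega⟩
  have hP₂ : P₂ ⊂ P := filter_ssubset.2 ⟨c, hc, by simp only [Set.mem_Ioo]; omega⟩
  have h₁ := ih P₁ hP₁ inter_subset_right hnc_inter
  have h₂ := ih P₂ hP₂ inter_subset_right hnc_inter
  have hmem₁ {z : ℕ} (hz : z ∈ P) (h : a ≤ z ∧ z ≤ b) : z ∈ P₁ := mem_filter.2 ⟨hz, h⟩
  have hmem₂ {z : ℕ} (hz : z ∈ P) (h : ¬(a < z ∧ z < b)) : z ∈ P₂ := mem_filter.2 ⟨hz, h⟩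
  have h₁' : 2 < #P₁ := two_lt_card.2 ⟨a, hmem₁ ha (by omega), c, hmem₁ hc (by omega),
    b, hmem₁ hb (by omega), by omega, by omega, by omega⟩
  have h₂' : 2 < #P₂ := two_lt_card.2 ⟨a, hmem₂ ha (by omega), d, hmem₂ hd (by omega),
    b, hmem₂ hb (by omega), by omega, by omega, by omega⟩
  have hcard : #P₁ + #P₂ = #P + 2 := card_filter_mem_Icc_add_card_filter_notMem_Ioo ha hb hlt
  calc #S ≤ #(insert (a, b) (S ∩ diagonals P₁ ∪ S ∩ diagonals P₂)) := card_le_card hcover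
    _ ≤ #(S ∩ diagonals P₁) + #(S ∩ diagonals P₂) + 1 :=
      (card_insert_le _ _).trans (Nat.add_le_add_right (card_union_le _ _) 1)
    _ ≤ #P - 3 := by omega

theorem mul_card_sub_three_le_two_mul_card_diagonals (P : Finset ℕ) :
    #P * (#P - 3) ≤ 2 * #(diagonals P) := by
  have hchords := two_mul_card_chords P
  have hsides := card_chords_sdiff_diagonals_le P
  have hsplit := card_le_card_sdiff_add_card (s := chords P) (t := diagonals P)
  rcases le_or_gt #P 3 with h | h
  · simp [Nat.sub_eq_zero_of_le h]
  · have hmul : #P * (#P - 1) = #P * (#P - 3) + 2 * #P := by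
      rw [mul_comm 2, ← Nat.mul_add]
      congr 1
      omega
    omega

theorem card_diagonals_le_mul_of_subset_biUnion {P : Finset ℕ} {k : ℕ}
    (page : Fin k → Finset (ℕ × ℕ)) (hcover : diagonals P ⊆ univ.biUnion page)
    (hnc : ∀ i, Noncrossing (page i)) : #(diagonals P) ≤ k * (#P - 3) :=
  calc #(diagonals P) ≤ #(univ.biUnion fun i => page i ∩ diagonals P) := by
        refine card_le_card fun e he => ?_
        obtain ⟨i, -, hi⟩ := mem_biUnion.1 (hcover he)
        exact mem_biUnion.2 ⟨i, mem_univ i, mem_inter.2 ⟨hi, he⟩⟩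
    _ ≤ ∑ i, #(page i ∩ diagonals P) := card_biUnion_le
    _ ≤ ∑ _i : Fin k, (#P - 3) := sum_le_sum fun i _ =>
        card_le_card_sub_three_of_noncrossing inter_subset_right fun e he f hf =>
          hnc i e (mem_inter.1 he).1 f (mem_inter.1 hf).1
    _ = k * (#P - 3) := by simp

theorem HasBookEmbedding.exists_noncrossing_cover_chords {V : Type*} [Fintype V] {k : ℕ}
    (h : HasBookEmbedding (⊤ : SimpleGraph V) k) :
    ∃ P : Finset ℕ, #P = Fintype.card V ∧ ∃ page : Fin k → Finset (ℕ × ℕ),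
      chords P ⊆ univ.biUnion page ∧ ∀ i, Noncrossing (page i) := by
  classical
  obtain ⟨L, hL, σ, hσ⟩ := h
  refine ⟨univ.image L, card_image_of_injective _ hL, fun i => (chords (univ.image L)).filter
    fun c => ∃ (u v : V) (huv : u ≠ v), L u = c.1 ∧ L v = c.2 ∧ σ ⟨s(u, v), huv⟩ = i, ?_, ?_⟩
  · intro c hc
    obtain ⟨hu, hv, hlt⟩ := mem_chords.1 hc
    obtain ⟨u, -, hu⟩ := mem_image.1 hu
    obtain ⟨v, -, hv⟩ := mem_image.1 hv
    have huv : u ≠ v := by rintro rfl; omega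
    exact mem_biUnion.2 ⟨_, mem_univ _, mem_filter.2 ⟨hc, u, v, huv, hu, hv, rfl⟩⟩
  · rintro i c hc c' hc' ⟨h₁, h₂, h₃⟩
    obtain ⟨-, u, v, huv, hu, hv, hi⟩ := mem_filter.1 hc
    obtain ⟨-, u', v', huv', hu', hv', hi'⟩ := mem_filter.1 hc'
    exact hσ _ _ (hi.trans hi'.symm) ⟨u, v, u', v', rfl, rfl, by omega, by omega, by omega⟩

theorem le_of_hasBookEmbedding_top {V : Type*} [Fintype V] {k : ℕ}
    (hV : 4 ≤ Fintype.card V) (h : HasBookEmbedding (⊤ : SimpleGraph V) k) :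
    (Fintype.card V + 1) / 2 ≤ k := by
  obtain ⟨P, hP, page, hcover, hnc⟩ := h.exists_noncrossing_cover_chords
  have hdiag := card_diagonals_le_mul_of_subset_biUnion page ((filter_subset _ _).trans hcover) hnc
  have hcount := mul_card_sub_three_le_two_mul_card_diagonals P
  rw [hP] at hdiag hcount
  have : Fintype.card V * (Fintype.card V - 3) ≤ 2 * k * (Fintype.card V - 3) := by
    rw [mul_assoc]; omega
  have := Nat.le_of_mul_le_mul_right this (by omega)
  omega

theorem succ_div_two_mod_ne {m s t : ℕ} (hst : s + 2 ≤ t) (hts : t + 2 ≤ s + 2 * m) :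
    (s + 1) / 2 % m ≠ (t + 1) / 2 % m := by
  intro h
  have hdvd := Nat.sub_mod_eq_zero_of_mod_eq h.symm
  rw [Nat.mod_eq_of_lt (by omega)] at hdvd
  omega

theorem pagesWrt_of_lt_two_mul {V : Type*} (G : SimpleGraph V) {L : V → ℕ} {m : ℕ} (hm : 0 < m)
    (hL : ∀ v, L v < 2 * m) : PagesWrt G L m := by
  let sum : Sym2 V → ℕ := Sym2.lift ⟨fun u v => L u + L v, fun u v => add_comm _ _⟩
  refine ⟨fun e => ⟨(sum e + 1) / 2 % m, Nat.mod_lt _ hm⟩, ?_⟩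
  rintro ⟨_, _⟩ ⟨_, _⟩ hpage ⟨a, b, c, d, rfl, rfl, hac, hcb, hbd⟩
  have hd := hL d
  exact succ_div_two_mod_ne (m := m) (s := L a + L b) (t := L c + L d) (by omega) (by omega)
    (Fin.mk.inj_iff.1 hpage)

theorem hasBookEmbedding_of_card_le_two_mul {V : Type*} [Fintype V] (G : SimpleGraph V) {m : ℕ}
    (hm : 0 < m) (hV : Fintype.card V ≤ 2 * m) : HasBookEmbedding G m :=
  ⟨fun v => Fintype.equivFin V v, Fin.val_injective.comp (Fintype.equivFin V).injective,
    pagesWrt_of_lt_two_mul G hm fun v => (Fintype.equivFin V v).isLt.trans_le hV⟩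

/-- For `n ≥ 4`, the complete graph `K_n` has book thickness
exactly `⌈n / 2⌉`. -/
theorem complete_graph_book_thickness (n : ℕ) (hn : 4 ≤ n) :
    bookThickness (⊤ : SimpleGraph (Fin n)) = (n + 1) / 2 := by
  have hupper := hasBookEmbedding_of_card_le_two_mul (⊤ : SimpleGraph (Fin n))
    (m := (n + 1) / 2) (by omega) (by rw [Fintype.card_fin]; omega)
  refine le_antisymm (Nat.sInf_le hupper) (le_csInf ⟨_, hupper⟩ fun k hk => ?_)
  simpa using le_of_hasBookEmbedding_top (by simpa using hn) hk
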